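/- The function H̃ is strictly decreasing on the interval (0, 1/√2) and strictly increasing on the interval [1/√2, +∞). -/

import Mathlib

open Filter Set

/-- `w` is the root of `q (z^3 - z) + 1 = 0` with `Im w ≥ 0`, `Re w > 0` having the
smallest real part among all such roots. -/
def IsQtilde (q : ℝ) (w : ℂ) : Prop :=
  (q : ℂ) * (w ^ 3 - w) + 1 = 0 ∧ 0 ≤ w.im ∧ 0 < w.re ∧
    ∀ z : ℂ, (q : ℂ) * (z ^ 3 - z) + 1 = 0 → 0 ≤ z.im → 0 < z.re → w.re ≤ z.re

/-- `H̃(q) = |(q̃ - 1)/(q̃ + 1)| · exp(q · Re(q̃²))` where `q̃` is the distinguished root. -/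
noncomputable def Htilde (q : ℝ) : ℝ :=
  ‖(Classical.epsilon (IsQtilde q) - 1) / (Classical.epsilon (IsQtilde q) + 1)‖ *
    Real.exp (q * ((Classical.epsilon (IsQtilde q)) ^ 2).re)

/-!
Let `r = Re q̃`. If `3 r² ≤ 1`, the cubic `z³ - z + 1/q` has the three real roots `r`,
`(-r ± √(4 - 3r²))/2`, so `q̃ = r` and `q = 1/(r - r³)`; if `3 r² ≥ 1`, its roots are
`r ± i√(3r² - 1)` and `-2r`, so `q̃ = r + i√(3r² - 1)` and `q = 1/(8r³ - 2r)`. Hence `q ↦ r` is a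
decreasing bijection of `(0, ∞)`, and `log H̃` is an explicit function of `r` whose derivative has
the sign of `3r² - 1 < 0` in the first range and of `2r² - 1` in the second. So `log H̃` decreases
in `r` up to `1/√2` and increases afterwards; as `r = 1/√2` corresponds to `q = 1/√2`, this
reverses into the claimed behaviour in `q`.
-/

open Real

theorem one_div_sqrt_lt_iff {n x : ℝ} (hn : 0 < n) (hx : 0 < x) :
    1 / √n < x ↔ 1 < n * x ^ 2 := by
  rw [one_div, ← sqrt_inv, sqrt_lt' hx, inv_lt_iff_one_lt_mul₀ hn, mul_comm]

theorem one_div_sqrt_le_iff {n x : ℝ} (hn : 0 < n) (hx : 0 < x) :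
    1 / √n ≤ x ↔ 1 ≤ n * x ^ 2 := by
  rw [one_div, ← sqrt_inv, sqrt_le_left hx.le, inv_le_iff_one_le_mul₀ hn, mul_comm]

theorem le_one_div_sqrt_iff {n x : ℝ} (hn : 0 < n) (hx : 0 < x) :
    x ≤ 1 / √n ↔ n * x ^ 2 ≤ 1 := by
  simpa only [not_lt] using (one_div_sqrt_lt_iff hn hx).not

theorem lt_one_div_sqrt_iff {n x : ℝ} (hn : 0 < n) (hx : 0 < x) :
    x < 1 / √n ↔ n * x ^ 2 < 1 := by
  simpa only [not_le] using (one_div_sqrt_le_iff hn hx).not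

theorem one_div_sqrt_three_lt_one_div_sqrt_two : 1 / √3 < 1 / √2 :=
  one_div_lt_one_div_of_lt (by positivity) (sqrt_lt_sqrt (by norm_num) (by norm_num))

theorem mul_sq_one_div_sqrt {n : ℝ} (hn : 0 < n) : n * (1 / √n) ^ 2 = 1 := by
  rw [div_pow, sq_sqrt hn.le]; field_simp

section PiecewiseMonotone

variable {α β : Type*} [LinearOrder α] [Preorder β] [DecidableLE α] {f g : α → β} {s t : Set α}
  {c : α}

theorem StrictMonoOn.ite_le (hf : StrictMonoOn f s) (hg : StrictMonoOn g t) (hs : IsGreatest s c)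
    (ht : IsLeast t c) (hc : f c = g c) :
    StrictMonoOn (fun x => if x ≤ c then f x else g x) (s ∪ t) := by
  refine (hf.congr fun x hx => (if_pos (hs.2 hx)).symm).union
    (hg.congr fun x hx => ?_) hs ht
  split_ifs with h
  · rw [le_antisymm h (ht.2 hx), hc]
  · rfl

theorem StrictAntiOn.ite_le (hf : StrictAntiOn f s) (hg : StrictAntiOn g t) (hs : IsGreatest s c)
    (ht : IsLeast t c) (hc : f c = g c) :
    StrictAntiOn (fun x => if x ≤ c then f x else g x) (s ∪ t) :=
  StrictMonoOn.ite_le (β := βᵒᵈ) hf hg hs ht hc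

end PiecewiseMonotone

section Reparametrization

variable {α β γ : Type*} [LinearOrder α] [LinearOrder β] [Preorder γ] {f : α → γ} {φ : β → α}
  {t : Set β}

theorem StrictAntiOn.strictAntiOn_image_of_comp (hφ : StrictAntiOn φ t)
    (hfφ : StrictMonoOn (f ∘ φ) t) : StrictAntiOn f (φ '' t) := by
  rintro _ ⟨y, hy, rfl⟩ _ ⟨y', hy', rfl⟩ hlt
  exact hfφ hy' hy ((hφ.lt_iff_gt hy hy').1 hlt)

theorem StrictAntiOn.strictMonoOn_image_of_comp (hφ : StrictAntiOn φ t)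
    (hfφ : StrictAntiOn (f ∘ φ) t) : StrictMonoOn f (φ '' t) :=
  hφ.strictAntiOn_image_of_comp (γ := γᵒᵈ) hfφ

end Reparametrization

theorem cubic_root_iff_of_factor {p : ℝ} (hp : p ≠ 0) {r₁ r₂ r₃ : ℂ}
    (hfac : ∀ z : ℂ, z ^ 3 - z + p = (z - r₁) * (z - r₂) * (z - r₃)) (z : ℂ) :
    ((1 / p : ℝ) : ℂ) * (z ^ 3 - z) + 1 = 0 ↔ z = r₁ ∨ z = r₂ ∨ z = r₃ := by
  have hp' : (p : ℂ) ≠ 0 := by exact_mod_cast hp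
  rw [show ((1 / p : ℝ) : ℂ) * (z ^ 3 - z) + 1 = (z ^ 3 - z + p) / p by push_cast; field_simp,
    div_eq_zero_iff, or_iff_left hp', hfac]
  simp only [mul_eq_zero, sub_eq_zero, or_assoc]

theorem epsilon_isQtilde_eq {q : ℝ} {w₀ : ℂ} (h : ∀ w, IsQtilde q w ↔ w = w₀) :
    Classical.epsilon (IsQtilde q) = w₀ :=
  (h _).1 (Classical.epsilon_spec ⟨w₀, (h w₀).2 rfl⟩)

theorem isQtilde_iff_eq_mk {a : ℝ} (ha : 0 < a) (ha' : 1 ≤ 3 * a ^ 2) (w : ℂ) :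
    IsQtilde (1 / (8 * a ^ 3 - 2 * a)) w ↔ w = ⟨a, √(3 * a ^ 2 - 1)⟩ := by
  set b := √(3 * a ^ 2 - 1)
  have hb : b ^ 2 = 3 * a ^ 2 - 1 := sq_sqrt (by linarith)
  have hroots := cubic_root_iff_of_factor (p := 8 * a ^ 3 - 2 * a) (by nlinarith)
    (r₁ := ⟨a, b⟩) (r₂ := ⟨a, -b⟩) (r₃ := ((-2 * a : ℝ) : ℂ)) fun z => by
      have hbC : (b : ℂ) ^ 2 = 3 * a ^ 2 - 1 := by exact_mod_cast hb
      simp only [Complex.mk_eq_add_mul_I]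
      push_cast
      linear_combination -(z + 2 * a) * hbC + ((z + 2 * a) * b ^ 2) * Complex.I_sq
  constructor
  · rintro ⟨hroot, him, hre, -⟩
    rcases (hroots w).1 hroot with rfl | rfl | rfl
    · rfl
    · have : b = 0 := le_antisymm (by simpa using him) (sqrt_nonneg _)
      simp [this]
    · simp only [Complex.ofReal_re] at hre; linarith
  · rintro rfl
    refine ⟨(hroots _).2 (Or.inl rfl), sqrt_nonneg _, ha, fun z hz _ hzre => ?_⟩
    rcases (hroots z).1 hz with rfl | rfl | rfl
    · rfl
    · rfl
    · simp only [Complex.ofReal_re] at hzre; linarith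

theorem isQtilde_iff_eq_ofReal {t : ℝ} (ht : 0 < t) (ht' : 3 * t ^ 2 ≤ 1) (w : ℂ) :
    IsQtilde (1 / (t - t ^ 3)) w ↔ w = t := by
  set s := √(4 - 3 * t ^ 2)
  have hs : s ^ 2 = 4 - 3 * t ^ 2 := sq_sqrt (by linarith)
  have hs0 : 0 ≤ s := sqrt_nonneg _
  have hts : 3 * t ≤ s := by nlinarith
  have hroots := cubic_root_iff_of_factor (p := t - t ^ 3) (by nlinarith)
    (r₁ := t) (r₂ := ((-t + s) / 2 : ℝ)) (r₃ := ((-t - s) / 2 : ℝ)) fun z => by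
      have hsC : (s : ℂ) ^ 2 = 4 - 3 * t ^ 2 := by exact_mod_cast hs
      push_cast
      linear_combination ((z - t) / 4) * hsC
  constructor
  · rintro ⟨hroot, -, hre, hmin⟩
    rcases (hroots w).1 hroot with rfl | rfl | rfl
    · rfl
    · have hle := hmin t ((hroots t).2 (Or.inl rfl)) (by simp) (by simpa using ht)
      simp only [Complex.ofReal_re] at hle
      congr 1; linarith
    · simp only [Complex.ofReal_re] at hre; linarith
  · rintro rfl
    refine ⟨(hroots _).2 (Or.inl rfl), by simp, by simpa using ht, fun z hz _ hzre => ?_⟩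
    rcases (hroots z).1 hz with rfl | rfl | rfl
    · rfl
    · simp only [Complex.ofReal_re]; linarith
    · simp only [Complex.ofReal_re] at hzre; linarith

noncomputable def logHtildeReal (t : ℝ) : ℝ :=
  log ((1 - t) / (1 + t)) + t ^ 2 / (t - t ^ 3)

noncomputable def logHtildeComplex (a : ℝ) : ℝ :=
  log ((2 * a - 1) / (2 * a + 1)) / 2 + (1 - 2 * a ^ 2) / (8 * a ^ 3 - 2 * a)

theorem Htilde_eq_exp_logHtildeReal {t : ℝ} (ht : 0 < t) (ht' : 3 * t ^ 2 ≤ 1) :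
    Htilde (1 / (t - t ^ 3)) = exp (logHtildeReal t) := by
  have ht1 : t < 1 := by nlinarith
  have hnorm : ‖((t : ℂ) - 1) / (t + 1)‖ = (1 - t) / (1 + t) := by
    rw [show ((t : ℂ) - 1) / (t + 1) = ((-((1 - t) / (1 + t)) : ℝ) : ℂ) by push_cast; ring,
      Complex.norm_real, norm_neg, Real.norm_of_nonneg (by apply div_nonneg <;> linarith)]
  rw [Htilde, epsilon_isQtilde_eq (isQtilde_iff_eq_ofReal ht ht'), hnorm, logHtildeReal, exp_add,
    exp_log (by apply div_pos <;> linarith), ← Complex.ofReal_pow, Complex.ofReal_re,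
    one_div_mul_eq_div]

theorem Htilde_eq_exp_logHtildeComplex {a : ℝ} (ha : 0 < a) (ha' : 1 ≤ 3 * a ^ 2) :
    Htilde (1 / (8 * a ^ 3 - 2 * a)) = exp (logHtildeComplex a) := by
  have ha2 : 1 < 2 * a := by nlinarith
  have hb : √(3 * a ^ 2 - 1) ^ 2 = 3 * a ^ 2 - 1 := sq_sqrt (by linarith)
  set w : ℂ := ⟨a, √(3 * a ^ 2 - 1)⟩
  have hnorm : ‖(w - 1) / (w + 1)‖ = √((2 * a - 1) / (2 * a + 1)) := by
    rw [Complex.norm_def, Complex.normSq_div]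
    congr 1
    simp only [Complex.normSq_apply, w, Complex.sub_re, Complex.add_re, Complex.sub_im,
      Complex.add_im, Complex.one_re, Complex.one_im]
    rw [div_eq_div_iff (by nlinarith) (by linarith)]
    nlinarith
  have hre : (w ^ 2).re = 1 - 2 * a ^ 2 := by
    rw [sq, Complex.mul_re]
    linear_combination -hb
  rw [Htilde, epsilon_isQtilde_eq (isQtilde_iff_eq_mk ha ha'), hnorm, hre, logHtildeComplex,
    exp_add, ← log_sqrt (by apply div_nonneg <;> linarith),
    exp_log (sqrt_pos.2 (by apply div_pos <;> linarith)), one_div_mul_eq_div]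

theorem hasDerivAt_logHtildeReal {t : ℝ} (ht : 0 < t) (ht' : t < 1) :
    HasDerivAt logHtildeReal ((3 * t ^ 2 - 1) / (1 - t ^ 2) ^ 2) t := by
  have h1 : 1 - t ≠ 0 := by linarith
  have h2 : 1 + t ≠ 0 := by linarith
  have h3 : 1 - t ^ 2 ≠ 0 := by nlinarith
  have h4 : t - t ^ 3 ≠ 0 := by
    rw [show t - t ^ 3 = t * (1 - t ^ 2) by ring]; exact mul_ne_zero ht.ne' h3
  have hlog := (((hasDerivAt_id t).const_sub 1).div ((hasDerivAt_id t).const_add 1) h2).log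
    (div_ne_zero h1 h2)
  have hrat := (hasDerivAt_pow 2 t).div ((hasDerivAt_id t).sub (hasDerivAt_pow 3 t)) h4
  refine (hlog.add hrat).congr_deriv ?_
  simp only [id, Pi.div_apply, Pi.sub_apply]
  field_simp
  ring

theorem hasDerivAt_logHtildeComplex {a : ℝ} (ha : 1 < 2 * a) :
    HasDerivAt logHtildeComplex
      ((2 * a ^ 2 - 1) * (12 * a ^ 2 - 1) / (2 * a ^ 2 * (4 * a ^ 2 - 1) ^ 2)) a := by
  have h0 : a ≠ 0 := by rintro rfl; linarith
  have h1 : 2 * a - 1 ≠ 0 := by linarith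
  have h2 : 2 * a + 1 ≠ 0 := by linarith
  have h4 : 8 * a ^ 3 - 2 * a ≠ 0 := by
    rw [show 8 * a ^ 3 - 2 * a = 2 * a * (2 * a - 1) * (2 * a + 1) by ring]; positivity
  have hlin := (hasDerivAt_id a).const_mul 2
  have hlog := (((hlin.sub_const 1).div (hlin.add_const 1) h2).log (div_ne_zero h1 h2)).div_const 2
  have hrat := ((hasDerivAt_pow 2 a).const_mul 2).const_sub 1 |>.div
    (((hasDerivAt_pow 3 a).const_mul 8).sub hlin) h4
  refine (hlog.add hrat).congr_deriv ?_
  simp only [id, Pi.div_apply, Pi.sub_apply]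
  rw [show 8 * a ^ 3 - 2 * a = 2 * a * (2 * a - 1) * (2 * a + 1) by ring,
    show 4 * a ^ 2 - 1 = (2 * a - 1) * (2 * a + 1) by ring]
  field_simp
  ring

theorem logHtildeReal_strictAntiOn : StrictAntiOn logHtildeReal (Ioc 0 (1 / √3)) := by
  have hderiv : ∀ t ∈ Ioc 0 (1 / √3),
      HasDerivAt logHtildeReal ((3 * t ^ 2 - 1) / (1 - t ^ 2) ^ 2) t := fun t ht =>
    hasDerivAt_logHtildeReal ht.1 (by nlinarith [(le_one_div_sqrt_iff three_pos ht.1).1 ht.2])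
  refine strictAntiOn_of_hasDerivWithinAt_neg (convex_Ioc _ _)
    (fun t ht => (hderiv t ht).continuousAt.continuousWithinAt)
    (fun t ht => (hderiv t (interior_subset ht)).hasDerivWithinAt) fun t ht => ?_
  rw [interior_Ioc] at ht
  have h3 := (lt_one_div_sqrt_iff three_pos ht.1).1 ht.2
  have : 0 < 1 - t ^ 2 := by nlinarith
  exact div_neg_of_neg_of_pos (by linarith) (by positivity)

theorem logHtildeComplex_strictAntiOn :
    StrictAntiOn logHtildeComplex (Icc (1 / √3) (1 / √2)) := by
  have hderiv : ∀ a ∈ Icc (1 / √3) (1 / √2), HasDerivAt logHtildeComplex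
      ((2 * a ^ 2 - 1) * (12 * a ^ 2 - 1) / (2 * a ^ 2 * (4 * a ^ 2 - 1) ^ 2)) a := fun a ha => by
    have ha0 : 0 < a := lt_of_lt_of_le (by positivity) ha.1
    exact hasDerivAt_logHtildeComplex (by nlinarith [(one_div_sqrt_le_iff three_pos ha0).1 ha.1])
  refine strictAntiOn_of_hasDerivWithinAt_neg (convex_Icc _ _)
    (fun a ha => (hderiv a ha).continuousAt.continuousWithinAt)
    (fun a ha => (hderiv a (interior_subset ha)).hasDerivWithinAt) fun a ha => ?_
  rw [interior_Icc] at ha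
  have ha0 : 0 < a := lt_of_lt_of_le (by positivity) ha.1.le
  have h3 := (one_div_sqrt_lt_iff three_pos ha0).1 ha.1
  have h2 := (lt_one_div_sqrt_iff two_pos ha0).1 ha.2
  have : 0 < 4 * a ^ 2 - 1 := by linarith
  exact div_neg_of_neg_of_pos (mul_neg_of_neg_of_pos (by linarith) (by linarith)) (by positivity)

theorem logHtildeComplex_strictMonoOn : StrictMonoOn logHtildeComplex (Ici (1 / √2)) := by
  have hderiv : ∀ a ∈ Ici (1 / √2), HasDerivAt logHtildeComplex
      ((2 * a ^ 2 - 1) * (12 * a ^ 2 - 1) / (2 * a ^ 2 * (4 * a ^ 2 - 1) ^ 2)) a := fun a ha => by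
    have ha0 : 0 < a := lt_of_lt_of_le (by positivity) ha
    exact hasDerivAt_logHtildeComplex (by nlinarith [(one_div_sqrt_le_iff two_pos ha0).1 ha])
  refine strictMonoOn_of_hasDerivWithinAt_pos (convex_Ici _)
    (fun a ha => (hderiv a ha).continuousAt.continuousWithinAt)
    (fun a ha => (hderiv a (interior_subset ha)).hasDerivWithinAt) fun a ha => ?_
  rw [interior_Ici] at ha
  have ha0 : 0 < a := lt_of_lt_of_le (by positivity) ha.le
  have h2 := (one_div_sqrt_lt_iff two_pos ha0).1 ha
  have : 0 < 4 * a ^ 2 - 1 := by linarith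
  exact div_pos (mul_pos (by linarith) (by linarith)) (by positivity)

/-- `q = 1 / cubicConst r` is the parameter for which `Re q̃ = r`. -/
noncomputable def cubicConst (r : ℝ) : ℝ :=
  if r ≤ 1 / √3 then r - r ^ 3 else 8 * r ^ 3 - 2 * r

noncomputable def logHtildeOfRe (r : ℝ) : ℝ :=
  if r ≤ 1 / √3 then logHtildeReal r else logHtildeComplex r

theorem Htilde_one_div_cubicConst {r : ℝ} (hr : 0 < r) :
    Htilde (1 / cubicConst r) = exp (logHtildeOfRe r) := by
  unfold cubicConst logHtildeOfRe
  split_ifs with h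
  · exact Htilde_eq_exp_logHtildeReal hr ((le_one_div_sqrt_iff three_pos hr).1 h)
  · exact Htilde_eq_exp_logHtildeComplex hr ((one_div_sqrt_lt_iff three_pos hr).1 (not_le.1 h)).le

theorem logHtildeReal_eq_logHtildeComplex {c : ℝ} (hc0 : 0 < c) (hc : 3 * c ^ 2 = 1) :
    logHtildeReal c = logHtildeComplex c := by
  have hc1 : 1 < 2 * c := by nlinarith
  have hsq : (2 * c - 1) / (2 * c + 1) = ((1 - c) / (1 + c)) ^ 2 := by
    rw [div_pow, div_eq_div_iff (by linarith) (by positivity)]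
    linear_combination 2 * hc
  have hrat : c ^ 2 / (c - c ^ 3) = (1 - 2 * c ^ 2) / (8 * c ^ 3 - 2 * c) := by
    rw [div_eq_div_iff (by nlinarith) (by nlinarith)]
    linear_combination c * (2 * c ^ 2 + 1) * hc
  rw [logHtildeReal, logHtildeComplex, hsq, log_pow, hrat]
  push_cast
  ring

theorem logHtildeOfRe_strictAntiOn : StrictAntiOn logHtildeOfRe (Ioc 0 (1 / √2)) := by
  have hc : (0 : ℝ) < 1 / √3 := by positivity
  rw [← Ioc_union_Icc_eq_Ioc hc one_div_sqrt_three_lt_one_div_sqrt_two.le]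
  exact logHtildeReal_strictAntiOn.ite_le logHtildeComplex_strictAntiOn (isGreatest_Ioc hc)
    (isLeast_Icc one_div_sqrt_three_lt_one_div_sqrt_two.le)
    (logHtildeReal_eq_logHtildeComplex hc (mul_sq_one_div_sqrt three_pos))

theorem logHtildeOfRe_strictMonoOn : StrictMonoOn logHtildeOfRe (Ici (1 / √2)) :=
  logHtildeComplex_strictMonoOn.congr fun _ hr =>
    (if_neg (not_le.2 (one_div_sqrt_three_lt_one_div_sqrt_two.trans_le hr))).symm

theorem cubicConst_strictMonoOn : StrictMonoOn cubicConst (Ici 0) := by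
  have hc : (0 : ℝ) ≤ 1 / √3 := by positivity
  rw [← Icc_union_Ici_eq_Ici hc]
  refine StrictMonoOn.ite_le (fun x hx y hy hxy => ?_) (fun x hx y hy hxy => ?_)
    (isGreatest_Icc hc) isLeast_Ici
    (by linear_combination (-3 * (1 / √3)) * mul_sq_one_div_sqrt three_pos)
  · have hy3 := (le_one_div_sqrt_iff three_pos (hx.1.trans_lt hxy)).1 hy.2
    have h : x ^ 2 + x * y + y ^ 2 < 1 := by nlinarith [hx.1]
    nlinarith [mul_pos (sub_pos.2 hxy) (sub_pos.2 h)]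
  · have hx0 : 0 < x := lt_of_lt_of_le (by positivity) hx.out
    have hx3 := (one_div_sqrt_le_iff three_pos hx0).1 hx
    have h : 1 < 4 * (x ^ 2 + x * y + y ^ 2) := by nlinarith
    nlinarith [mul_pos (sub_pos.2 hxy) (sub_pos.2 h)]

theorem cubicConst_pos {r : ℝ} (hr : 0 < r) : 0 < cubicConst r := by
  simpa [cubicConst] using cubicConst_strictMonoOn self_mem_Ici hr.le hr

theorem continuous_cubicConst : Continuous cubicConst := by
  refine Continuous.if_le (by fun_prop) (by fun_prop) continuous_id continuous_const fun r hr => ?_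
  have hr3 := mul_sq_one_div_sqrt three_pos
  rw [← hr] at hr3
  linear_combination (-3 * r) * hr3

theorem exists_cubicConst_eq {p : ℝ} (hp : 0 < p) : ∃ r, 0 < r ∧ cubicConst r = p := by
  have h0 : cubicConst 0 = 0 := by simp [cubicConst]
  have hX : 1 / √3 < 1 + p := (one_div_sqrt_lt_iff three_pos (by linarith)).2 (by nlinarith)
  have hpX : p ≤ cubicConst (1 + p) := by
    rw [cubicConst, if_neg (not_le.2 hX)]
    nlinarith [pow_pos hp 3]
  obtain ⟨r, hr, hrp⟩ := intermediate_value_Icc (by linarith : (0 : ℝ) ≤ 1 + p)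
    continuous_cubicConst.continuousOn ⟨h0.le.trans hp.le, hpX⟩
  exact ⟨r, lt_of_le_of_ne hr.1 (by rintro rfl; linarith), hrp⟩

theorem one_div_cubicConst_strictAntiOn : StrictAntiOn (fun r => 1 / cubicConst r) (Ioi 0) :=
  one_div_strictAntiOn.comp_strictMonoOn (cubicConst_strictMonoOn.mono Ioi_subset_Ici_self)
    fun _ hr => cubicConst_pos hr

theorem cubicConst_one_div_sqrt_two : cubicConst (1 / √2) = √2 := by
  rw [cubicConst, if_neg (not_le.2 one_div_sqrt_three_lt_one_div_sqrt_two)]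
  calc 8 * (1 / √2) ^ 3 - 2 * (1 / √2) = 2 * (1 / √2) := by
        linear_combination (4 * (1 / √2)) * mul_sq_one_div_sqrt two_pos
    _ = √2 := by rw [mul_one_div, div_sqrt]

theorem exists_one_div_cubicConst_eq {q : ℝ} (hq : 0 < q) :
    ∃ r, 0 < r ∧ 1 / cubicConst r = q := by
  obtain ⟨r, hr, hrq⟩ := exists_cubicConst_eq (one_div_pos.2 hq)
  exact ⟨r, hr, by rw [hrq, one_div_one_div]⟩

theorem Htilde_monotone :
    StrictAntiOn Htilde (Set.Ioo 0 (1 / Real.sqrt 2)) ∧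
    StrictMonoOn Htilde (Set.Ici (1 / Real.sqrt 2)) := by
  have hd : (0 : ℝ) < 1 / √2 := by positivity
  have hq := one_div_cubicConst_strictAntiOn
  have hqd : 1 / cubicConst (1 / √2) = 1 / √2 := by rw [cubicConst_one_div_sqrt_two]
  have hH : EqOn (exp ∘ logHtildeOfRe) (Htilde ∘ fun r => 1 / cubicConst r) (Ioi 0) :=
    fun _ hr => (Htilde_one_div_cubicConst hr).symm
  constructor
  · have hG := exp_strictMono.comp_strictMonoOn logHtildeOfRe_strictMonoOn
    refine ((hq.mono (Ioi_subset_Ioi hd.le)).strictAntiOn_image_of_comp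
      ((hG.mono Ioi_subset_Ici_self).congr (hH.mono (Ioi_subset_Ioi hd.le)))).mono
      fun q hq' => ?_
    obtain ⟨r, hr, rfl⟩ := exists_one_div_cubicConst_eq hq'.1
    exact ⟨r, (hq.lt_iff_gt hr hd).1 (by rw [hqd]; exact hq'.2), rfl⟩
  · have hG := exp_strictMono.comp_strictAntiOn logHtildeOfRe_strictAntiOn
    refine ((hq.mono Ioc_subset_Ioi_self).strictMonoOn_image_of_comp
      (hG.congr (hH.mono Ioc_subset_Ioi_self))).mono fun q hq' => ?_
    obtain ⟨r, hr, rfl⟩ := exists_one_div_cubicConst_eq (hd.trans_le hq')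
    exact ⟨r, ⟨hr, (hq.le_iff_ge hd hr).1 (by rwa [hqd])⟩, rfl⟩
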